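/- There is a fixed singly exponential function E (i.e., E(n) = 2^{p(n)} for some polynomial p) such that the following holds: for every counting signature Σ, every Y-bounded, N-dimensional frame F over Σ, and every integer Z, the frame F has a Z-solution if and only if it has a Z-solution w̄ each of whose components is bounded by E(L + M* + N + log Y + log Z), where L is the number of 1-types over Σ and M* the number of invertible message-types over Σ. -/

import Mathlib

/-- A counting signature: finite sets of unary and binary predicate symbols,
with a distinguished finite set of binary predicates (the counting predicates). -/
structure CSig where
  U : Type
  B : Type
  [instU : Fintype U]
  [instDU : DecidableEq U]
  [instB : Fintype B]
  [instDB : DecidableEq B]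
  counting : Finset B

attribute [instance] CSig.instU CSig.instDU CSig.instB CSig.instDB

/-- A structure interpreting a counting signature over domain `A`. -/
structure Struc (σ : CSig) (A : Type) where
  unary : σ.U → A → Bool
  binary : σ.B → A → A → Bool

/-- A 1-type over `σ`: a truth assignment to all literals in the single variable x. -/
structure OneType (σ : CSig) where
  u : σ.U → Bool
  d : σ.B → Bool
deriving DecidableEq, Fintype

/-- A 2-type over `σ`: a truth assignment to all equality-free literals in x, y. -/
structure TwoType (σ : CSig) where
  ux : σ.U → Bool
  uy : σ.U → Bool
  dx : σ.B → Bool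
  dy : σ.B → Bool
  rxy : σ.B → Bool
  ryx : σ.B → Bool
deriving DecidableEq

variable {σ : CSig} {A : Type}

/-- Explicit equivalence of `TwoType σ` with a product, giving finiteness. -/
def TwoType.equivProd (σ : CSig) :
    TwoType σ ≃ ((σ.U → Bool) × (σ.U → Bool) × (σ.B → Bool) × (σ.B → Bool) ×
      (σ.B → Bool) × (σ.B → Bool)) where
  toFun τ := ⟨τ.ux, τ.uy, τ.dx, τ.dy, τ.rxy, τ.ryx⟩
  invFun p := ⟨p.1, p.2.1, p.2.2.1, p.2.2.2.1, p.2.2.2.2.1, p.2.2.2.2.2⟩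
  left_inv τ := rfl
  right_inv p := rfl

instance : Fintype (TwoType σ) := Fintype.ofEquiv _ (TwoType.equivProd σ).symm

/-- The result of transposing x and y in a 2-type. -/
def TwoType.inv (τ : TwoType σ) : TwoType σ := ⟨τ.uy, τ.ux, τ.dy, τ.dx, τ.ryx, τ.rxy⟩

/-- The 1-type (of x) included in a 2-type. -/
def TwoType.tp1 (τ : TwoType σ) : OneType σ := ⟨τ.ux, τ.dx⟩

/-- tp₂(τ) = tp₁(τ⁻¹). -/
def TwoType.tp2 (τ : TwoType σ) : OneType σ := ⟨τ.uy, τ.dy⟩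

/-- The 1-type of an element. -/
def Struc.tp1 (S : Struc σ A) (a : A) : OneType σ :=
  ⟨fun p => S.unary p a, fun f => S.binary f a a⟩

/-- The 2-type of a pair of (distinct) elements. -/
def Struc.tp2 (S : Struc σ A) (a b : A) : TwoType σ :=
  ⟨fun p => S.unary p a, fun p => S.unary p b,
   fun f => S.binary f a a, fun f => S.binary f b b,
   fun f => S.binary f a b, fun f => S.binary f b a⟩

/-- A 2-type is a message-type if it contains f(x,y) for some counting predicate f. -/
def IsMessage (σ : CSig) (τ : TwoType σ) : Prop := ∃ f ∈ σ.counting, τ.rxy f = true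

instance : DecidablePred (IsMessage σ) := fun τ => by unfold IsMessage; infer_instance

/-- A message-type whose inverse is also a message-type. -/
def IsInvertible (σ : CSig) (τ : TwoType σ) : Prop := IsMessage σ τ ∧ IsMessage σ τ.inv

instance : DecidablePred (IsInvertible σ) := fun τ => by unfold IsInvertible; infer_instance

/-- A 2-type is silent if neither it nor its inverse is a message-type. -/
def IsSilent (σ : CSig) (τ : TwoType σ) : Prop := ¬ IsMessage σ τ ∧ ¬ IsMessage σ τ.inv

/-- The (sub)type of message-types over σ. -/
def MsgType (σ : CSig) := {τ : TwoType σ // IsMessage σ τ}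

instance : Fintype (MsgType σ) := Subtype.fintype _
instance : DecidableEq (MsgType σ) := fun a b => by
  exact (inferInstance : DecidableEq {τ : TwoType σ // IsMessage σ τ}) a b

/-- Y-branching: every element sends at most Y messages along each counting predicate. -/
def Struc.Branching (S : Struc σ A) (Y : ℕ) : Prop :=
  ∀ a : A, ∀ f ∈ σ.counting, {b : A | b ≠ a ∧ S.binary f a b = true}.encard ≤ (Y : ℕ∞)

def Struc.FinitelyBranching (S : Struc σ A) : Prop := ∃ Y : ℕ, S.Branching Y

/-- Chromatic: distinct elements connected by a chain of 1 or 2 invertible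
message-types have distinct 1-types. -/
def Struc.Chromatic (S : Struc σ A) : Prop :=
  (∀ a a' : A, a ≠ a' → IsInvertible σ (S.tp2 a a') → S.tp1 a ≠ S.tp1 a') ∧
  (∀ a a' a'' : A, a ≠ a' → a' ≠ a'' → a ≠ a'' →
     IsInvertible σ (S.tp2 a a') → IsInvertible σ (S.tp2 a' a'') → S.tp1 a ≠ S.tp1 a'')

/-- Z-differentiated: each 1-type is realized either at most once or more than Z times. -/
def Struc.Differentiated (S : Struc σ A) (Z : ℕ) : Prop :=
  ∀ π : OneType σ, {a : A | S.tp1 a = π}.encard ≤ 1 ∨ (Z : ℕ∞) < {a : A | S.tp1 a = π}.encard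

/-- π and π' form a noisy pair: no silent 2-type connects an element of 1-type π
to an element of 1-type π'. -/
def NoisyPair (S : Struc σ A) (π π' : OneType σ) : Prop :=
  ¬ ∃ a a' : A, a ≠ a' ∧ S.tp1 a = π ∧ S.tp1 a' = π' ∧ IsSilent σ (S.tp2 a a')

/-- The Π-profile of a: for each message-type μ, the number of elements b with 1-type
in Π such that tp[a,b] = μ. -/
noncomputable def Struc.pr (S : Struc σ A) (P : Set (OneType σ)) (a : A) : MsgType σ → ℕ∞ :=
  fun μ => {b : A | b ≠ a ∧ S.tp1 b ∈ P ∧ S.tp2 a b = μ.1}.encard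

/-- The Π-count of a: for each counting predicate f, the number of elements b ≠ a with
1-type in Π such that f[a,b] holds. -/
noncomputable def Struc.ct (S : Struc σ A) (P : Set (OneType σ)) (a : A) :
    {f : σ.B // f ∈ σ.counting} → ℕ∞ :=
  fun f => {b : A | b ≠ a ∧ S.tp1 b ∈ P ∧ S.binary f.1 a b = true}.encard

/-- A Π-group: all elements share the same 1-type and the same Π-count. -/
def PiGroup (S : Struc σ A) (P : Set (OneType σ)) (B : Set A) : Prop :=
  ∀ a ∈ B, ∀ b ∈ B, S.tp1 a = S.tp1 b ∧ S.ct P a = S.ct P b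

/-- A π-patch: a {π}-group all of whose elements have {π}-profiles agreeing on the
invertible message-types (the first M* coordinates). -/
def PiPatch (S : Struc σ A) (π : OneType σ) (B : Set A) : Prop :=
  PiGroup S {π} B ∧
  ∀ a ∈ B, ∀ b ∈ B, ∀ μ : MsgType σ, IsInvertible σ μ.1 → S.pr {π} a μ = S.pr {π} b μ

/-- τ is realized in S. -/
def Realizes2 (S : Struc σ A) (τ : TwoType σ) : Prop := ∃ a b : A, a ≠ b ∧ S.tp2 a b = τ

/-- (Π,B)-approximation. -/
def PiBApprox (S S' : Struc σ A) (P : Set (OneType σ)) (B : Set A) : Prop :=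
  S'.Chromatic ∧
  (∀ τ : TwoType σ, Realizes2 S' τ → Realizes2 S τ) ∧
  ∀ a : A,
    S'.tp1 a = S.tp1 a ∧
    S'.pr Pᶜ a = S.pr Pᶜ a ∧
    (a ∉ B → S'.pr Set.univ a = S.pr Set.univ a) ∧
    (a ∈ B → S'.ct P a = S.ct P a)
/-- A star-type: a 1-type together with a vector of multiplicities indexed by the
message-types. -/
structure StarType (σ : CSig) where
  tp : OneType σ
  v : MsgType σ → ℕ
deriving DecidableEq

/-- The defining condition on star-types: v(μ) > 0 implies tp₁(μ) = π. -/
def StarType.IsValid (s : StarType σ) : Prop :=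
  ∀ μ : MsgType σ, 0 < s.v μ → μ.1.tp1 = s.tp

/-- The star-type of an element: its 1-type together with its profile. -/
noncomputable def StarOf (S : Struc σ A) (a : A) : StarType σ where
  tp := S.tp1 a
  v := fun μ => ({b : A | b ≠ a ∧ S.tp2 a b = μ.1}.encard).toNat

/-- X-sparse: at most X distinct star-types are realized. -/
noncomputable def Struc.Sparse (S : Struc σ A) (X : ℕ) : Prop :=
  {st : StarType σ | ∃ a : A, StarOf S a = st}.encard ≤ (X : ℕ∞)

/-- A chromatic star-type: for every 1-type π', the multiplicities of invertible
message-types μ with tp₂(μ) = π' sum to at most 1, and to 0 when π' = tp. -/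
def StarType.Chromatic (s : StarType σ) : Prop :=
  ∀ π' : OneType σ,
    (∑ μ ∈ Finset.univ.filter (fun μ : MsgType σ => IsInvertible σ μ.1 ∧ μ.1.tp2 = π'),
        s.v μ) ≤ 1 ∧
    (π' = s.tp →
      (∑ μ ∈ Finset.univ.filter (fun μ : MsgType σ => IsInvertible σ μ.1 ∧ μ.1.tp2 = π'),
        s.v μ) = 0)

/-- A frame over σ: a finite set of (pairwise distinct) star-types, a set I of
unordered pairs of 1-types, and a choice θ of a silent 2-type for each pair in I. -/
structure Frame (σ : CSig) where
  stars : Finset (StarType σ)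
  valid : ∀ s ∈ stars, s.IsValid
  I : Set (Sym2 (OneType σ))
  θ : Sym2 (OneType σ) → TwoType σ
  hθ : ∀ p ∈ I, IsSilent σ (θ p) ∧ Sym2.mk (θ p).tp1 (θ p).tp2 = p

/-- Y-bounded frame: all star-type multiplicities are at most Y. -/
def Frame.Bounded (F : Frame σ) (Y : ℕ) : Prop :=
  ∀ s ∈ F.stars, ∀ μ : MsgType σ, s.v μ ≤ Y

/-- A chromatic frame: all its star-types are chromatic. -/
def Frame.Chromatic (F : Frame σ) : Prop := ∀ s ∈ F.stars, s.Chromatic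

/-- F describes S: the stars of F are exactly the realized star-types; I consists of the
non-noisy pairs of 1-types; and each θ-value is realized. -/
def Describes (F : Frame σ) (S : Struc σ A) : Prop :=
  (∀ st : StarType σ, st ∈ F.stars ↔ ∃ a : A, StarOf S a = st) ∧
  (∀ π π' : OneType σ, Sym2.mk π π' ∈ F.I ↔ ¬ NoisyPair S π π') ∧
  (∀ p ∈ F.I, ∃ a b : A, a ≠ b ∧ S.tp2 a b = F.θ p)

/-- The number M* of invertible message-types over σ. -/
def MstarCard (σ : CSig) : ℕ :=
  (Finset.univ.filter (fun μ : MsgType σ => IsInvertible σ μ.1)).card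

/-- p_{ik} = 1: the star-type sends no message to any element of 1-type π. -/
def PZero (s : StarType σ) (π : OneType σ) : Prop :=
  ∀ μ : MsgType σ, μ.1.tp2 = π → s.v μ = 0

instance (s : StarType σ) (π : OneType σ) : Decidable (PZero s π) := by
  unfold PZero; infer_instance

/-- r_{ik}: total multiplicity of non-invertible message-types with tp₂ = π. -/
def RCoeff (s : StarType σ) (π : OneType σ) : ℕ :=
  ∑ μ ∈ Finset.univ.filter (fun μ : MsgType σ => ¬ IsInvertible σ μ.1 ∧ μ.1.tp2 = π), s.v μ

/-- s_{ik}: total multiplicity of message-types with tp₂ = π. -/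
def SCoeff (s : StarType σ) (π : OneType σ) : ℕ :=
  ∑ μ ∈ Finset.univ.filter (fun μ : MsgType σ => μ.1.tp2 = π), s.v μ

/-- u_i = Σ_k o_{ik} w_k. -/
def Frame.uVal (F : Frame σ) (w : StarType σ → ℕ) (π : OneType σ) : ℕ :=
  ∑ s ∈ F.stars.filter (fun s => s.tp = π), w s

/-- v_j = Σ_k q_{jk} w_k. -/
def Frame.vVal (F : Frame σ) (w : StarType σ → ℕ) (μ : MsgType σ) : ℕ :=
  ∑ s ∈ F.stars, s.v μ * w s

/-- x_{ii'} = Σ_k o_{ik} p_{i'k} w_k. -/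
def Frame.xVal (F : Frame σ) (w : StarType σ → ℕ) (π π' : OneType σ) : ℕ :=
  ∑ s ∈ F.stars.filter (fun s => s.tp = π ∧ PZero s π'), w s

/-- w is a Z-solution of F (conditions C1–C6, over positive integers). -/
def IsZSolution (F : Frame σ) (Z : ℕ) (w : StarType σ → ℕ) : Prop :=
  (∀ s ∈ F.stars, 0 < w s) ∧
  (∀ μ μ' : MsgType σ, IsInvertible σ μ.1 → μ'.1 = μ.1.inv → F.vVal w μ = F.vVal w μ') ∧
  (∀ π : OneType σ, ∀ s ∈ F.stars, SCoeff s π ≤ F.uVal w π) ∧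
  (∀ π : OneType σ, F.uVal w π ≤ 1 ∨ Z < F.uVal w π) ∧
  (∀ π π' : OneType σ, ∀ s ∈ F.stars, s.tp = π →
     (1 < F.uVal w π ∨ RCoeff s π' ≤ F.xVal w π' π)) ∧
  (∀ π π' : OneType σ, Sym2.mk π π' ∉ F.I → F.uVal w π ≤ 1 ∨ F.uVal w π' ≤ 1) ∧
  (∀ π π' : OneType σ, ∀ s ∈ F.stars, Sym2.mk π π' ∉ F.I → s.tp = π →
     (1 < F.uVal w π ∨ F.xVal w π' π ≤ RCoeff s π'))

/-- u_i over ℕ* = ℕ ∪ {ℵ₀}. -/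
def Frame.uValE (F : Frame σ) (w : StarType σ → ℕ∞) (π : OneType σ) : ℕ∞ :=
  ∑ s ∈ F.stars.filter (fun s => s.tp = π), w s

/-- v_j over ℕ*. -/
def Frame.vValE (F : Frame σ) (w : StarType σ → ℕ∞) (μ : MsgType σ) : ℕ∞ :=
  ∑ s ∈ F.stars, (s.v μ : ℕ∞) * w s

/-- x_{ii'} over ℕ*. -/
def Frame.xValE (F : Frame σ) (w : StarType σ → ℕ∞) (π π' : OneType σ) : ℕ∞ :=
  ∑ s ∈ F.stars.filter (fun s => s.tp = π ∧ PZero s π'), w s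

/-- w is an extended Z-solution of F: a Z-solution over ℕ* = ℕ ∪ {ℵ₀}
(with nonzero components). -/
def IsExtZSolution (F : Frame σ) (Z : ℕ) (w : StarType σ → ℕ∞) : Prop :=
  (∀ s ∈ F.stars, w s ≠ 0) ∧
  (∀ μ μ' : MsgType σ, IsInvertible σ μ.1 → μ'.1 = μ.1.inv → F.vValE w μ = F.vValE w μ') ∧
  (∀ π : OneType σ, ∀ s ∈ F.stars, (SCoeff s π : ℕ∞) ≤ F.uValE w π) ∧
  (∀ π : OneType σ, F.uValE w π ≤ 1 ∨ (Z : ℕ∞) < F.uValE w π) ∧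
  (∀ π π' : OneType σ, ∀ s ∈ F.stars, s.tp = π →
     (1 < F.uValE w π ∨ (RCoeff s π' : ℕ∞) ≤ F.xValE w π' π)) ∧
  (∀ π π' : OneType σ, Sym2.mk π π' ∉ F.I → F.uValE w π ≤ 1 ∨ F.uValE w π' ≤ 1) ∧
  (∀ π π' : OneType σ, ∀ s ∈ F.stars, Sym2.mk π π' ∉ F.I → s.tp = π →
     (1 < F.uValE w π ∨ F.xValE w π' π ≤ (RCoeff s π' : ℕ∞)))

/-- The data of a normal-form sentence φ*: a quantifier-free equality-free α(x)
(given semantically by the set of 1-types entailing it), a quantifier-free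
equality-free β(x,y) (given by the set of 2-types entailing it), and positive
counts C_h for the counting predicates. -/
structure NormalForm (σ : CSig) where
  alpha : OneType σ → Prop
  beta : TwoType σ → Prop
  C : σ.B → ℕ
  hC : ∀ f ∈ σ.counting, 0 < C f

/-- S ⊨ φ*. -/
def SatNF (N : NormalForm σ) (S : Struc σ A) : Prop :=
  (∀ a : A, N.alpha (S.tp1 a)) ∧
  (∀ a b : A, a ≠ b → N.beta (S.tp2 a b)) ∧
  (∀ f ∈ σ.counting, ∀ a : A,
     {b : A | b ≠ a ∧ S.binary f a b = true}.encard = (N.C f : ℕ∞))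

/-- F ⊨ φ*. -/
def FrameSatNF (N : NormalForm σ) (F : Frame σ) : Prop :=
  (∀ s ∈ F.stars, N.alpha s.tp) ∧
  (∀ s ∈ F.stars, ∀ μ : MsgType σ, 0 < s.v μ → N.beta μ.1 ∧ N.beta μ.1.inv) ∧
  (∀ p ∈ F.I, N.beta (F.θ p) ∧ N.beta ((F.θ p).inv)) ∧
  (∀ s ∈ F.stars, ∀ f ∈ σ.counting,
     (∑ μ ∈ Finset.univ.filter (fun μ : MsgType σ => μ.1.rxy f = true), s.v μ) = N.C f)

/-- The signature obtained from σ by adding k new unary predicates; the counting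
predicates are unchanged. -/
def addUnary (σ : CSig) (k : ℕ) : CSig where
  U := σ.U ⊕ Fin k
  B := σ.B
  counting := σ.counting

/-- S' (interpreting σ with k extra unary predicates) is an expansion of S:
it agrees with S on all predicates of σ. -/
def IsExpansion {σ : CSig} {k : ℕ} {A : Type} (S' : Struc (addUnary σ k) A)
    (S : Struc σ A) : Prop :=
  (∀ (p : σ.U) (a : A), S'.unary (Sum.inl p) a = S.unary p a) ∧
  (∀ (f : σ.B) (a b : A), S'.binary f a b = S.binary f a b)

/-!
Clamp the weights of a `Z`-solution `w` at `Λ = Z + 2 + M * Y`. Conditions (C2)–(C6) only compare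
the sums `u` and `x` with `1`, with `Z` and with star-type coefficients bounded by `M * Y`, so they
hold for every `w'` with `min w Λ ≤ w' ≤ w`. To restore the equations (C1), add to `min w Λ` a
minimal solution `y' ≤ w - min w Λ` of an integer linear system whose coefficients are polynomial
in `N`, `Y` and `Λ`. Minimal solutions are small: after homogenization, a solution is a nonnegative
combination of elementary (minimal-support) kernel vectors, which by Siegel's lemma are small
integer vectors, and a coefficient larger than `1` would let one subtract a kernel vector,
contradicting minimality.
-/

open Function Finset Matrix

section Elementary

variable {𝕜 : Type*} [Field 𝕜] [LinearOrder 𝕜] [IsStrictOrderedRing 𝕜] {κ : Type*} [Finite κ]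

/-- Elementary vectors of `K` in Rockafellar's sense: nonzero vectors of minimal support. -/
def IsElementary (K : Submodule 𝕜 (κ → 𝕜)) (g : κ → 𝕜) : Prop :=
  g ∈ K ∧ g ≠ 0 ∧ ∀ x ∈ K, support x ⊆ support g → ∃ q : 𝕜, x = q • g

theorem exists_add_smul_nonneg_support_ssubset {y x : κ → 𝕜} (hy : 0 ≤ y) (hx : x ≠ 0)
    (hxy : support x ⊆ support y) :
    ∃ t : 𝕜, 0 ≤ y + t • x ∧ support (y + t • x) ⊂ support y := by
  obtain ⟨j₀, hj₀, hmin⟩ := Set.exists_min_image (support x) (fun j => y j / |x j|)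
    (Set.toFinite _) (support_nonempty_iff.2 hx)
  have hx₀ : x j₀ ≠ 0 := hj₀
  have hy₀ : 0 < y j₀ := (hy j₀).lt_of_ne' (hxy hj₀)
  -- the longest step along `±x` that keeps `y` nonnegative
  refine ⟨-(y j₀ / x j₀), fun j => ?_, ⟨fun j hj => ?_, fun h => h (hxy hj₀) ?_⟩⟩
  · by_cases hxj : x j = 0
    · simpa [hxj] using hy j
    have hle : y j₀ / |x j₀| * |x j| ≤ y j := (le_div_iff₀ (abs_pos.2 hxj)).1 (hmin j hxj)
    have : |(y j₀ / x j₀) * x j| = y j₀ / |x j₀| * |x j| := by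
      rw [abs_mul, abs_div, abs_of_pos hy₀]
    simp only [Pi.add_apply, Pi.smul_apply, smul_eq_mul, Pi.zero_apply, neg_mul]
    linarith [le_abs_self ((y j₀ / x j₀) * x j)]
  · by_contra hyj
    have : x j = 0 := by_contra fun h => hyj (hxy h)
    simp_all
  · simp [div_mul_cancel₀ _ hx₀]

theorem exists_isElementary_support_subset {K : Submodule 𝕜 (κ → 𝕜)} {y : κ → 𝕜}
    (hyK : y ∈ K) (hy : 0 ≤ y) (hy₀ : y ≠ 0) :
    ∃ g, IsElementary K g ∧ 0 ≤ g ∧ support g ⊆ support y := by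
  induction hn : (support y).ncard using Nat.strong_induction_on generalizing y with
  | _ n ih =>
  by_cases hel : ∀ x ∈ K, support x ⊆ support y → ∃ q : 𝕜, x = q • y
  · exact ⟨y, ⟨hyK, hy₀, hel⟩, hy, subset_rfl⟩
  push Not at hel
  obtain ⟨x, hxK, hxy, hxq⟩ := hel
  have hx₀ : x ≠ 0 := fun h => hxq 0 (by simp [h])
  obtain ⟨t, hnonneg, hssub⟩ := exists_add_smul_nonneg_support_ssubset hy hx₀ hxy
  have hne : y + t • x ≠ 0 := by
    intro h
    have ht : t ≠ 0 := by rintro rfl; simp_all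
    exact hxq (-t⁻¹) (by rw [eq_neg_of_add_eq_zero_left h, smul_neg, neg_smul, neg_neg,
      smul_smul, inv_mul_cancel₀ ht, one_smul])
  obtain ⟨g, hg, hg₀, hgsub⟩ := ih _ (hn ▸ Set.ncard_lt_ncard hssub)
    (K.add_mem hyK (K.smul_mem t hxK)) hnonneg hne rfl
  exact ⟨g, hg, hg₀, hgsub.trans hssub.subset⟩

theorem exists_eq_sum_smul_of_nonneg {K : Submodule 𝕜 (κ → 𝕜)} {Γ : Type*} (φ : Γ → κ → 𝕜)
    (hφ : ∀ γ, φ γ ∈ K ∧ 0 ≤ φ γ)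
    (hgen : ∀ g, IsElementary K g → 0 ≤ g → ∃ γ, φ γ ≠ 0 ∧ support (φ γ) ⊆ support g)
    {y : κ → 𝕜} (hyK : y ∈ K) (hy : 0 ≤ y) :
    ∃ (r : ℕ) (t : Fin r → 𝕜) (γ : Fin r → Γ),
      r ≤ (support y).ncard ∧ 0 ≤ t ∧ y = ∑ i, t i • φ (γ i) := by
  induction hn : (support y).ncard using Nat.strong_induction_on generalizing y with
  | _ n ih =>
  rcases eq_or_ne y 0 with rfl | hy₀
  · exact ⟨0, Fin.elim0, Fin.elim0, Nat.zero_le _, fun i => i.elim0, by simp⟩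
  obtain ⟨g, hg, hg₀, hgy⟩ := exists_isElementary_support_subset hyK hy hy₀
  obtain ⟨γ, hγ₀, hγg⟩ := hgen g hg hg₀
  obtain ⟨t, hnonneg, hssub⟩ :=
    exists_add_smul_nonneg_support_ssubset hy hγ₀ (hγg.trans hgy)
  have ht : t ≤ 0 := by
    obtain ⟨j, hjy, hj⟩ := Set.exists_of_ssubset hssub
    have hyj : 0 < y j := (hy j).lt_of_ne' hjy
    simp only [mem_support, not_not, Pi.add_apply, Pi.smul_apply, smul_eq_mul] at hj
    by_contra! htpos
    linarith [mul_nonneg htpos.le ((hφ γ).2 j)]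
  obtain ⟨r, t', γ', hr, ht', hsum⟩ := ih _ (hn ▸ Set.ncard_lt_ncard hssub)
    (K.add_mem hyK (K.smul_mem t (hφ γ).1)) hnonneg rfl
  refine ⟨r + 1, Fin.cons (-t) t', Fin.cons γ γ', ?_, ?_, ?_⟩
  · have := Set.ncard_lt_ncard hssub
    omega
  · exact fun i => Fin.cases (neg_nonneg.2 ht) (fun i => ht' i) i
  · rw [Fin.sum_univ_succ, Fin.cons_zero, Fin.cons_zero]
    simp only [Fin.cons_succ, ← hsum]
    module

end Elementary

section IntegerMatrix

variable {ι κ : Type*}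

def Matrix.homogenize {R : Type*} [Neg R] (A : Matrix ι κ R) (b : ι → R) :
    Matrix ι (Option κ) R :=
  Matrix.of fun i o => o.elim (-b i) (A i)

theorem Matrix.homogenize_abs_le {A : Matrix ι κ ℤ} {b : ι → ℤ} {C : ℤ} (hA : ∀ i j, |A i j| ≤ C)
    (hb : ∀ i, |b i| ≤ C) (i : ι) (o : Option κ) : |A.homogenize b i o| ≤ C := by
  cases o
  · simpa [homogenize] using hb i
  · simpa [homogenize] using hA i _

variable [Fintype κ]

def Matrix.ratKer (A : Matrix ι κ ℤ) : Submodule ℚ (κ → ℚ) :=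
  LinearMap.ker (A.map (Int.cast : ℤ → ℚ)).mulVecLin

theorem Matrix.mem_ratKer {A : Matrix ι κ ℤ} {x : κ → ℚ} :
    x ∈ A.ratKer ↔ A.map (Int.cast : ℤ → ℚ) *ᵥ x = 0 := by
  rw [ratKer, LinearMap.mem_ker, mulVecLin_apply]

theorem Matrix.intCast_mem_ratKer_iff {A : Matrix ι κ ℤ} {d : κ → ℤ} :
    (Int.cast ∘ d : κ → ℚ) ∈ A.ratKer ↔ A *ᵥ d = 0 := by
  have : A.map (Int.cast : ℤ → ℚ) *ᵥ (Int.cast ∘ d) = Int.cast ∘ (A *ᵥ d) :=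
    funext fun i => (RingHom.map_mulVec (Int.castRingHom ℚ) A d i).symm
  simp [mem_ratKer, this, funext_iff]

theorem Matrix.natCast_mem_ratKer_iff {A : Matrix ι κ ℤ} {z : κ → ℕ} :
    (Nat.cast ∘ z : κ → ℚ) ∈ A.ratKer ↔ A *ᵥ (Nat.cast ∘ z) = 0 := by
  rw [← intCast_mem_ratKer_iff]
  exact Iff.of_eq (congrArg (· ∈ A.ratKer) (funext fun j => (Int.cast_natCast (z j)).symm))

theorem Matrix.mem_ratKer_iff_forall_mem_span {A : Matrix ι κ ℤ} {x : κ → ℚ} :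
    x ∈ A.ratKer ↔
      ∀ v ∈ Submodule.span ℚ (Set.range (A.map (Int.cast : ℤ → ℚ))), v ⬝ᵥ x = 0 := by
  rw [mem_ratKer]
  constructor
  · intro h v hv
    have : Submodule.span ℚ (Set.range (A.map Int.cast)) ≤
        LinearMap.ker ((dotProductBilin ℚ ℚ).flip x) := by
      rw [Submodule.span_le]
      rintro _ ⟨i, rfl⟩
      simp only [SetLike.mem_coe, LinearMap.mem_ker, LinearMap.flip_apply,
        dotProductBilin_apply_apply]
      exact congrFun h i
    simpa using this hv
  · exact fun h => funext fun i => h _ (Submodule.subset_span ⟨i, rfl⟩)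

theorem Matrix.abs_mulVec_le {A : Matrix ι κ ℤ} {v : κ → ℤ} {a c : ℤ} (hA : ∀ i j, |A i j| ≤ a)
    (hv : ∀ j, |v j| ≤ c) (i : ι) : |(A *ᵥ v) i| ≤ Fintype.card κ * (a * c) :=
  calc |(A *ᵥ v) i| ≤ ∑ j, |A i j * v j| := abs_sum_le_sum_abs _ _
    _ ≤ ∑ _j : κ, a * c := sum_le_sum fun j _ => by
        rw [abs_mul]
        exact mul_le_mul (hA i j) (hv j) (abs_nonneg _) ((abs_nonneg _).trans (hA i j))
    _ = _ := by simp

attribute [local instance] Matrix.seminormedAddCommGroup in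
theorem Int.Matrix.exists_ne_zero_int_vec_abs_le {α : Type*} [Fintype α] (B : Matrix α κ ℤ)
    (hcard : Fintype.card α < Fintype.card κ) {C : ℕ} (hC : 1 ≤ C) (hB : ∀ i j, |B i j| ≤ C) :
    ∃ t : κ → ℤ, t ≠ 0 ∧ B *ᵥ t = 0 ∧ ∀ j, |t j| ≤ (Fintype.card κ * C) ^ Fintype.card κ := by
  classical
  set k := Fintype.card κ
  have hk : 1 ≤ k := by omega
  have hbound : (1 : ℤ) ≤ (k * C) ^ k := one_le_pow₀ (by norm_cast; nlinarith)
  rcases Nat.eq_zero_or_pos (Fintype.card α) with hα | hα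
  · obtain ⟨j⟩ := Fintype.card_pos_iff.1 hk
    have : IsEmpty α := Fintype.card_eq_zero_iff.1 hα
    refine ⟨Pi.single j 1, by simp, Subsingleton.elim _ _, fun j' => ?_⟩
    rcases eq_or_ne j' j with rfl | h <;> simp [*, zero_le_one.trans hbound]
  obtain ⟨t, ht, hBt, hnorm⟩ := Int.Matrix.exists_ne_zero_int_vec_norm_le B hcard hα
  refine ⟨t, ht, hBt, fun j => ?_⟩
  have hnormB : max 1 ‖B‖ ≤ C := max_le (by exact_mod_cast hC)
    ((norm_le_iff (by positivity)).2 fun i j => by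
      rw [Int.norm_eq_abs, ← Int.cast_abs]; exact_mod_cast hB i j)
  have hexp : (Fintype.card α : ℝ) / (k - Fintype.card α) ≤ k := by
    have : (Fintype.card α : ℝ) + 1 ≤ k := by exact_mod_cast hcard
    rw [div_le_iff₀ (by linarith)]
    nlinarith
  have hbase : (1 : ℝ) ≤ k * max 1 ‖B‖ :=
    one_le_mul_of_one_le_of_one_le (by exact_mod_cast hk) (le_max_left _ _)
  have : (|t j| : ℝ) ≤ ((k * C : ℕ) : ℝ) ^ k :=
    calc (|t j| : ℝ) = ‖t j‖ := (Int.norm_eq_abs _).symm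
      _ ≤ ‖t‖ := norm_le_pi_norm t j
      _ ≤ (k * max 1 ‖B‖) ^ ((Fintype.card α : ℝ) / (k - Fintype.card α)) := hnorm
      _ ≤ (k * max 1 ‖B‖) ^ (k : ℝ) := Real.rpow_le_rpow_of_exponent_le hbase hexp
      _ ≤ ((k * C : ℕ) : ℝ) ^ k := by
        rw [Real.rpow_natCast]; push_cast; gcongr
  exact_mod_cast this

theorem Matrix.exists_ne_zero_mulVec_eq_zero_abs_le (A : Matrix ι κ ℤ) {C : ℕ} (hC : 1 ≤ C)
    (hA : ∀ i j, |A i j| ≤ C) {g : κ → ℚ} (hgK : g ∈ A.ratKer) (hg : g ≠ 0) :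
    ∃ d : κ → ℤ, d ≠ 0 ∧ A *ᵥ d = 0 ∧ ∀ j, |d j| ≤ (Fintype.card κ * C) ^ Fintype.card κ := by
  classical
  -- Siegel's lemma is applied to a basis of the row space, which has fewer than `card κ`
  -- elements since the rows are orthogonal to `g ≠ 0`
  obtain ⟨b, hbR, hspan, hind⟩ :=
    exists_linearIndependent ℚ (Set.range (A.map (Int.cast : ℤ → ℚ)))
  have : Finite b := hind.finite
  have := Fintype.ofFinite b
  choose row hrow using fun v : b => hbR v.2
  have hcard : Fintype.card b < Fintype.card κ := by
    have hne : Submodule.span ℚ (Set.range (A.map (Int.cast : ℤ → ℚ))) ≠ ⊤ := by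
      intro htop
      obtain ⟨j, hj⟩ := Function.ne_iff.1 hg
      exact hj (by simpa using
        mem_ratKer_iff_forall_mem_span.1 hgK (Pi.single j 1) (htop ▸ trivial))
    have := Submodule.finrank_lt hne
    rwa [← hspan, finrank_span_set_eq_card hind, Module.finrank_fintype_fun_eq_card,
      Set.toFinset_card] at this
  obtain ⟨d, hd, hBd, hbound⟩ := Int.Matrix.exists_ne_zero_int_vec_abs_le
    (Matrix.of fun v j => A (row v) j) hcard hC (fun _ _ => hA _ _)
  refine ⟨d, hd, intCast_mem_ratKer_iff.1 (mem_ratKer_iff_forall_mem_span.2 ?_), hbound⟩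
  intro v hv
  rw [← hspan] at hv
  refine Submodule.span_induction (fun v hv => ?_) (by simp) (fun _ _ _ _ h₁ h₂ => by
    simp [add_dotProduct, h₁, h₂]) (fun c _ _ h => by simp [smul_dotProduct, h]) hv
  rw [← show A.map Int.cast (row ⟨v, hv⟩) = v from hrow ⟨v, hv⟩]
  have := congrFun hBd ⟨v, hv⟩
  simp only [mulVec, dotProduct, Matrix.of_apply, Pi.zero_apply] at this
  simp only [dotProduct, Matrix.map_apply, Function.comp_apply]
  exact_mod_cast this

theorem IsElementary.exists_natCast_eq_smul {A : Matrix ι κ ℤ} {C : ℕ} (hC : 1 ≤ C)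
    (hA : ∀ i j, |A i j| ≤ C) {g : κ → ℚ} (hg : IsElementary A.ratKer g) (hg₀ : 0 ≤ g) :
    ∃ z : κ → ℕ, (∃ c : ℚ, 0 < c ∧ (Nat.cast ∘ z : κ → ℚ) = c • g) ∧
      ∀ j, z j ≤ (Fintype.card κ * C) ^ Fintype.card κ := by
  classical
  obtain ⟨hgK, hg_ne, hmul⟩ := hg
  -- the extra rows `x j = 0` for `j ∉ support g` cut the kernel down to the line through `g`
  set D : Matrix κ κ ℤ := diagonal fun j => if g j = 0 then 1 else 0
  have hker : ∀ x : κ → ℚ,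
      x ∈ (A.fromRows D).ratKer ↔ x ∈ A.ratKer ∧ support x ⊆ support g := by
    intro x
    simp only [mem_ratKer, fromRows_map, fromRows_mulVec, funext_iff, Sum.forall, Sum.elim_inl,
      Sum.elim_inr, Pi.zero_apply, D, diagonal_map (Int.cast_zero), mulVec_diagonal,
      support_subset_iff', mem_support, not_not]
    refine and_congr_right' (forall_congr' fun j => ?_)
    split_ifs <;> simp [*]
  have hAD : ∀ i j, |A.fromRows D i j| ≤ C := by
    rintro (i | i) j <;> simp [D, diagonal_apply, hA]
    split_ifs <;> simp [hC]
  obtain ⟨d, hd, hAd, hbound⟩ :=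
    (A.fromRows D).exists_ne_zero_mulVec_eq_zero_abs_le hC hAD ((hker g).2 ⟨hgK, subset_rfl⟩) hg_ne
  have hdK := (hker _).1 (intCast_mem_ratKer_iff.2 hAd)
  obtain ⟨q, hq⟩ := hmul _ hdK.1 hdK.2
  have hq0 : q ≠ 0 := by
    rintro rfl
    exact hd (funext fun j => by simpa using congrFun hq j)
  refine ⟨fun j => (d j).natAbs, ⟨|q|, abs_pos.2 hq0, funext fun j => ?_⟩, fun j => ?_⟩
  · have := congrFun hq j
    simp only [Function.comp_apply, Pi.smul_apply, smul_eq_mul] at this ⊢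
    rw [Nat.cast_natAbs, Int.cast_abs, this, abs_mul, abs_of_nonneg (hg₀ j)]
  · zify
    exact hbound j

theorem Matrix.exists_eq_sum_smul_natCast {A : Matrix ι κ ℤ} {C : ℕ} (hC : 1 ≤ C)
    (hA : ∀ i j, |A i j| ≤ C) {y : κ → ℚ} (hyK : y ∈ A.ratKer) (hy : 0 ≤ y) :
    ∃ (r : ℕ) (t : Fin r → ℚ) (z : Fin r → κ → ℕ), r ≤ Fintype.card κ ∧ 0 ≤ t ∧
      (∀ l, A *ᵥ (Nat.cast ∘ z l) = 0 ∧ ∀ j, z l j ≤ (Fintype.card κ * C) ^ Fintype.card κ) ∧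
      y = ∑ l, t l • (Nat.cast ∘ z l : κ → ℚ) := by
  let Γ := {z : κ → ℕ //
    A *ᵥ (Nat.cast ∘ z) = 0 ∧ ∀ j, z j ≤ (Fintype.card κ * C) ^ Fintype.card κ}
  have hgen : ∀ g, IsElementary A.ratKer g → 0 ≤ g →
      ∃ z : Γ, (Nat.cast ∘ z.1 : κ → ℚ) ≠ 0 ∧ support (Nat.cast ∘ z.1 : κ → ℚ) ⊆ support g := by
    intro g hg hg₀
    obtain ⟨z, ⟨c, hc, hz⟩, hzH⟩ := hg.exists_natCast_eq_smul hC hA hg₀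
    refine ⟨⟨z, natCast_mem_ratKer_iff.1 (hz ▸ A.ratKer.smul_mem c hg.1), hzH⟩, ?_, ?_⟩
    · rw [hz]; exact smul_ne_zero hc.ne' hg.2.1
    · rw [hz, support_const_smul_of_ne_zero c g hc.ne']
  obtain ⟨r, t, z, hr, ht, hsum⟩ := exists_eq_sum_smul_of_nonneg (fun z : Γ => Nat.cast ∘ z.1)
    (fun z => ⟨natCast_mem_ratKer_iff.2 z.2.1, fun _ => Nat.cast_nonneg _⟩) hgen hyK hy
  have hr' : r ≤ Fintype.card κ :=
    hr.trans ((Set.ncard_le_card _).trans Nat.card_eq_fintype_card.le)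
  exact ⟨r, t, fun l => (z l).1, hr', ht, fun l => (z l).2, hsum⟩

theorem Matrix.homogenize_mulVec {R : Type*} [CommRing R] (A : Matrix ι κ R) (b : ι → R)
    (v : Option κ → R) : A.homogenize b *ᵥ v = A *ᵥ (v ∘ some) - v none • b := by
  funext i
  simp [homogenize, mulVec, dotProduct, Fintype.sum_option]
  ring

theorem Matrix.homogenize_mulVec_natCast_eq_zero_iff {A : Matrix ι κ ℤ} {b : ι → ℤ}
    {v : Option κ → ℕ} :
    A.homogenize b *ᵥ (Nat.cast ∘ v) = 0 ↔ A *ᵥ (Nat.cast ∘ v ∘ some) = (v none : ℤ) • b := by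
  rw [homogenize_mulVec, sub_eq_zero]
  rfl

theorem Matrix.eq_zero_of_le_of_minimal {A : Matrix ι κ ℤ} {b : ι → ℤ} {y z : κ → ℕ}
    (hy : Minimal (fun y' : κ → ℕ => A *ᵥ (Nat.cast ∘ y') = b) y) (hzy : z ≤ y)
    (hz : A *ᵥ (Nat.cast ∘ z) = 0) : z = 0 := by
  have hsub : A *ᵥ (Nat.cast ∘ (y - z)) = b := by
    have : (Nat.cast ∘ (y - z) : κ → ℤ) = Nat.cast ∘ y - Nat.cast ∘ z :=
      funext fun j => Nat.cast_sub (hzy j)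
    rw [this, mulVec_sub, hz, sub_zero, hy.prop]
  funext j
  have h₁ : y j - z j = y j := congrFun (hy.eq_of_le hsub tsub_le_self) j
  have h₂ : z j ≤ y j := hzy j
  change z j = 0
  omega

theorem Matrix.le_of_minimal_solution (A : Matrix ι κ ℤ) (b : ι → ℤ) {C : ℕ} (hC : 1 ≤ C)
    (hA : ∀ i j, |A i j| ≤ C) (hb : ∀ i, |b i| ≤ C) {y : κ → ℕ}
    (hy : Minimal (fun y' : κ → ℕ => A *ᵥ (Nat.cast ∘ y') = b) y) (j : κ) :
    y j ≤ ((Fintype.card κ + 1) * C) ^ (Fintype.card κ + 2) := by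
  set k := Fintype.card κ
  set H := ((k + 1) * C) ^ (k + 1)
  set ŷ : Option κ → ℕ := fun o => o.elim 1 y
  have hŷ : (Nat.cast ∘ ŷ : Option κ → ℚ) ∈ (A.homogenize b).ratKer :=
    natCast_mem_ratKer_iff.2 <| homogenize_mulVec_natCast_eq_zero_iff.2
      (by simpa using hy.prop : A *ᵥ (Nat.cast ∘ y) = ((1 : ℕ) : ℤ) • b)
  obtain ⟨r, t, z, hr, ht, hz, hsum⟩ :=
    exists_eq_sum_smul_natCast hC (homogenize_abs_le hA hb) hŷ fun _ => Nat.cast_nonneg _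
  simp only [Fintype.card_option] at hr hz
  have hcoord : ∀ o, (ŷ o : ℚ) = ∑ l, t l * z l o := fun o => by
    simpa using congrFun hsum o
  have hterm : ∀ l o, t l * z l o ≤ ŷ o := fun l o => by
    rw [hcoord]
    exact single_le_sum (f := fun l => t l * (z l o : ℚ))
      (fun l _ => mul_nonneg (ht l) (Nat.cast_nonneg _)) (mem_univ l)
  -- a generator that fits under `y` could be subtracted, contradicting minimality
  have hsmall : ∀ l, t l * z l (some j) ≤ H := by
    intro l
    have hzH : (z l (some j) : ℚ) ≤ H := by exact_mod_cast (hz l).2 (some j)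
    by_cases ht1 : t l ≤ 1
    · nlinarith [mul_le_mul_of_nonneg_right ht1 (Nat.cast_nonneg (α := ℚ) (z l (some j)))]
    push Not at ht1
    have hnone : z l none = 0 := by
      by_contra h
      have : (1 : ℚ) ≤ z l none := by exact_mod_cast Nat.one_le_iff_ne_zero.2 h
      have : t l * z l none ≤ 1 := by simpa [ŷ] using hterm l none
      nlinarith
    have hle : z l ∘ some ≤ y := fun j' => by
      have : (z l (some j') : ℚ) ≤ y j' := by
        have : t l * z l (some j') ≤ y j' := hterm l (some j')
        nlinarith [(z l (some j')).cast_nonneg (α := ℚ)]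
      exact_mod_cast this
    have hker : A *ᵥ (Nat.cast ∘ (z l ∘ some)) = 0 := by
      simpa [hnone] using homogenize_mulVec_natCast_eq_zero_iff.1 (hz l).1
    have : z l (some j) = 0 := congrFun (eq_zero_of_le_of_minimal hy hle hker) j
    simp [this]
  have : (y j : ℚ) ≤ ((k + 1) * C * H : ℕ) :=
    calc (y j : ℚ) = ∑ l, t l * z l (some j) := hcoord (some j)
      _ ≤ ∑ _l : Fin r, (H : ℚ) := sum_le_sum fun l _ => hsmall l
      _ = r * H := by simp
      _ ≤ ((k + 1) * C * H : ℕ) := by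
        exact_mod_cast Nat.mul_le_mul_right _ (hr.trans (Nat.le_mul_of_pos_right _ hC))
  calc y j ≤ (k + 1) * C * H := by exact_mod_cast this
    _ = _ := (pow_succ' _ _).symm

theorem Matrix.exists_small_solution_le (A : Matrix ι κ ℤ) (b : ι → ℤ) {C : ℕ} (hC : 1 ≤ C)
    (hA : ∀ i j, |A i j| ≤ C) (hb : ∀ i, |b i| ≤ C) {y : κ → ℕ}
    (hy : A *ᵥ (Nat.cast ∘ y) = b) :
    ∃ y' ≤ y, A *ᵥ (Nat.cast ∘ y') = b ∧
      ∀ j, y' j ≤ ((Fintype.card κ + 1) * C) ^ (Fintype.card κ + 2) := by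
  obtain ⟨y', hy'y, hy'⟩ := exists_minimal_le_of_wellFoundedLT
    (fun y' : κ → ℕ => A *ᵥ (Nat.cast ∘ y') = b) y hy
  exact ⟨y', hy'y, hy'.prop, A.le_of_minimal_solution b hC hA hb hy'⟩

theorem Matrix.exists_clamped_mulVec_eq_zero (A : Matrix ι κ ℤ) {Y Λ : ℕ} (hΛ : 1 ≤ Λ)
    (hA : ∀ i j, |A i j| ≤ Y) {w : κ → ℕ} (hw : A *ᵥ (Nat.cast ∘ w) = 0) :
    ∃ w' : κ → ℕ, (∀ j, min (w j) Λ ≤ w' j ∧ w' j ≤ w j) ∧ A *ᵥ (Nat.cast ∘ w') = 0 ∧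
      ∀ j, w' j ≤ Λ + ((Fintype.card κ + 1) ^ 2 * (Y + 1) * Λ) ^ (Fintype.card κ + 2) := by
  set k := Fintype.card κ
  set C := (k + 1) * (Y + 1) * Λ
  have hYC : Y * Λ ≤ C := Nat.mul_le_mul (by nlinarith) le_rfl
  set base : κ → ℕ := fun j => min (w j) Λ
  have hbase : A *ᵥ (Nat.cast ∘ (w - base)) = -(A *ᵥ (Nat.cast ∘ base)) := by
    have : (Nat.cast ∘ w : κ → ℤ) = Nat.cast ∘ base + Nat.cast ∘ (w - base) :=
      funext fun j => by simp [base]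
    rw [this, mulVec_add] at hw
    exact eq_neg_of_add_eq_zero_right hw
  have hAC : ∀ i j, |A i j| ≤ C := fun i j =>
    (hA i j).trans (by exact_mod_cast (Nat.le_mul_of_pos_right Y hΛ).trans hYC)
  have hbC : ∀ i, |(-(A *ᵥ (Nat.cast ∘ base))) i| ≤ C := fun i => by
    rw [Pi.neg_apply, abs_neg]
    refine (abs_mulVec_le (c := Λ) hA (fun j => ?_) i).trans ?_
    · rw [Function.comp_apply, Nat.abs_cast]
      exact_mod_cast min_le_right (w j) Λ
    · have : k * (Y * Λ) ≤ (k + 1) * ((Y + 1) * Λ) :=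
        Nat.mul_le_mul (by omega) (Nat.mul_le_mul (by omega) le_rfl)
      exact_mod_cast this.trans_eq (mul_assoc _ _ _).symm
  obtain ⟨y', hy'le, hy', hy'bound⟩ :=
    A.exists_small_solution_le _ (Nat.one_le_iff_ne_zero.2 (by positivity)) hAC hbC hbase
  refine ⟨base + y', fun j => ?_, ?_, fun j => ?_⟩
  · have := hy'le j
    simp only [Pi.add_apply, Pi.sub_apply, base] at this ⊢
    omega
  · rw [show (Nat.cast ∘ (base + y') : κ → ℤ) = Nat.cast ∘ base + Nat.cast ∘ y' from
      funext fun j => by simp, mulVec_add, hy', add_neg_cancel]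
  · calc base j + y' j ≤ Λ + ((k + 1) * C) ^ (k + 2) := add_le_add (min_le_right _ _) (hy'bound j)
      _ = _ := by simp only [C]; ring

end IntegerMatrix

section Frame

theorem RCoeff_le_SCoeff (s : StarType σ) (π : OneType σ) : RCoeff s π ≤ SCoeff s π :=
  sum_le_sum_of_subset fun μ hμ => by
    simp only [mem_filter] at hμ ⊢
    exact ⟨hμ.1, hμ.2.2⟩

theorem Frame.Bounded.SCoeff_le {F : Frame σ} {Y : ℕ} (hY : F.Bounded Y) {s : StarType σ}
    (hs : s ∈ F.stars) (π : OneType σ) : SCoeff s π ≤ Fintype.card (MsgType σ) * Y :=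
  calc SCoeff s π ≤ ∑ μ, s.v μ := sum_le_sum_of_subset (filter_subset _ _)
    _ ≤ ∑ _μ : MsgType σ, Y := sum_le_sum fun μ _ => hY s hs μ
    _ = _ := by simp

theorem Finset.min_sum_le_sum {α : Type*} (T : Finset α) {f g : α → ℕ} {c : ℕ}
    (h : ∀ s ∈ T, min (f s) c ≤ g s) : min (∑ s ∈ T, f s) c ≤ ∑ s ∈ T, g s := by
  by_cases hc : ∃ s ∈ T, c ≤ f s
  · obtain ⟨s, hs, hcs⟩ := hc
    calc min (∑ s ∈ T, f s) c ≤ g s := (min_le_right _ _).trans (min_eq_right hcs ▸ h s hs)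
      _ ≤ ∑ s ∈ T, g s := single_le_sum (fun _ _ => Nat.zero_le _) hs
  · push Not at hc
    exact (min_le_left _ _).trans
      (sum_le_sum fun s hs => min_eq_left (hc s hs).le ▸ h s hs)

theorem IsZSolution.of_clamp {F : Frame σ} {Z Λ : ℕ} {w w' : StarType σ → ℕ}
    (hw : IsZSolution F Z w) (hZΛ : Z < Λ) (hΛ : 1 < Λ)
    (hSΛ : ∀ s ∈ F.stars, ∀ π, SCoeff s π ≤ Λ)
    (hclamp : ∀ s ∈ F.stars, min (w s) Λ ≤ w' s ∧ w' s ≤ w s)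
    (hC1 : ∀ μ μ' : MsgType σ, IsInvertible σ μ.1 → μ'.1 = μ.1.inv → F.vVal w' μ = F.vVal w' μ') :
    IsZSolution F Z w' := by
  obtain ⟨hpos, -, hC2, hC3, hC4, hC5, hC6⟩ := hw
  have hsum : ∀ T ⊆ F.stars,
      min (∑ s ∈ T, w s) Λ ≤ ∑ s ∈ T, w' s ∧ ∑ s ∈ T, w' s ≤ ∑ s ∈ T, w s :=
    fun T hT => ⟨T.min_sum_le_sum fun s hs => (hclamp s (hT hs)).1,
      sum_le_sum fun s hs => (hclamp s (hT hs)).2⟩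
  have hu : ∀ π, min (F.uVal w π) Λ ≤ F.uVal w' π ∧ F.uVal w' π ≤ F.uVal w π :=
    fun π => hsum _ (filter_subset _ _)
  have hx : ∀ π π', min (F.xVal w π π') Λ ≤ F.xVal w' π π' ∧ F.xVal w' π π' ≤ F.xVal w π π' :=
    fun π π' => hsum _ (filter_subset _ _)
  have hR : ∀ s ∈ F.stars, ∀ π, RCoeff s π ≤ Λ :=
    fun s hs π => (RCoeff_le_SCoeff s π).trans (hSΛ s hs π)
  refine ⟨fun s hs => ?_, hC1, fun π s hs => ?_, fun π => ?_, fun π π' s hs htp => ?_,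
    fun π π' hI => ?_, fun π π' s hs hI htp => ?_⟩
  · have := hpos s hs; have := hclamp s hs; omega
  · have := hC2 π s hs; have := hu π; have := hSΛ s hs π; omega
  · have := hC3 π; have := hu π; omega
  · have := hC4 π π' s hs htp; have := hu π; have := hx π' π; have := hR s hs π'; omega
  · have := hC5 π π' hI; have := hu π; have := hu π'; omega
  · have := hC6 π π' s hs hI htp; have := hu π; have := hx π' π; omega

abbrev InvMsgType (σ : CSig) := {μ : MsgType σ // IsInvertible σ μ.1}

def InvMsgType.inv (μ : InvMsgType σ) : MsgType σ := ⟨μ.1.1.inv, μ.2.2⟩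

def Frame.c1Matrix (F : Frame σ) : Matrix (InvMsgType σ) F.stars ℤ :=
  Matrix.of fun μ s => (s.1.v μ.1 : ℤ) - s.1.v μ.inv

theorem Frame.c1Matrix_abs_le {F : Frame σ} {Y : ℕ} (hY : F.Bounded Y) (μ : InvMsgType σ)
    (s : F.stars) : |F.c1Matrix μ s| ≤ Y := by
  have h₁ := hY s.1 s.2 μ.1
  have h₂ := hY s.1 s.2 μ.inv
  simp only [c1Matrix, Matrix.of_apply, abs_le]
  omega

theorem Frame.c1Matrix_mulVec (F : Frame σ) (w : StarType σ → ℕ) (μ : InvMsgType σ) :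
    (F.c1Matrix *ᵥ (Nat.cast ∘ fun s : F.stars => w s)) μ =
      F.vVal w μ.1 - F.vVal w μ.inv := by
  simp only [c1Matrix, Matrix.mulVec, dotProduct, Matrix.of_apply, Function.comp_apply, vVal,
    sub_mul, sum_sub_distrib, Nat.cast_sum, Nat.cast_mul]
  rw [sum_coe_sort F.stars (fun s => (s.v μ.1 : ℤ) * w s),
    sum_coe_sort F.stars (fun s => (s.v μ.inv : ℤ) * w s)]

theorem Frame.c1Matrix_mulVec_eq_zero_iff (F : Frame σ) (w : StarType σ → ℕ) :
    F.c1Matrix *ᵥ (Nat.cast ∘ fun s : F.stars => w s) = 0 ↔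
      ∀ μ μ' : MsgType σ, IsInvertible σ μ.1 → μ'.1 = μ.1.inv → F.vVal w μ = F.vVal w μ' := by
  simp only [funext_iff, c1Matrix_mulVec, Pi.zero_apply, sub_eq_zero, Nat.cast_inj]
  constructor
  · rintro h μ μ' hμ hμ'
    rw [h ⟨μ, hμ⟩]
    congr
    exact Subtype.ext hμ'.symm
  · exact fun h μ => h μ.1 _ μ.2 rfl

theorem IsZSolution.exists_bounded {F : Frame σ} {Y Z : ℕ} (hY : F.Bounded Y)
    {w : StarType σ → ℕ} (hw : IsZSolution F Z w) :
    ∃ w', IsZSolution F Z w' ∧ ∀ s ∈ F.stars,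
      w' s ≤ (Z + 2 + Fintype.card (MsgType σ) * Y) + ((F.stars.card + 1) ^ 2 * (Y + 1) *
        (Z + 2 + Fintype.card (MsgType σ) * Y)) ^ (F.stars.card + 2) := by
  set Λ := Z + 2 + Fintype.card (MsgType σ) * Y
  obtain ⟨w', hclamp, hker, hbound⟩ := F.c1Matrix.exists_clamped_mulVec_eq_zero
    (Λ := Λ) (by omega) (F.c1Matrix_abs_le hY) ((F.c1Matrix_mulVec_eq_zero_iff w).2 hw.2.1)
  set W : StarType σ → ℕ := fun s => if h : s ∈ F.stars then w' ⟨s, h⟩ else 0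
  have hW : (fun s : F.stars => W s) = w' := funext fun s => dif_pos s.2
  refine ⟨W, hw.of_clamp (Λ := Λ) (by omega) (by omega) (fun s hs π => ?_) (fun s hs => ?_) ?_,
    fun s hs => ?_⟩
  · exact (hY.SCoeff_le hs π).trans (Nat.le_add_left _ _)
  · simpa only [W, dif_pos hs] using hclamp ⟨s, hs⟩
  · rwa [← Frame.c1Matrix_mulVec_eq_zero_iff, hW]
  · simpa [W, dif_pos hs] using hbound ⟨s, hs⟩

end Frame

theorem card_msgType_le (σ : CSig) :
    Fintype.card (MsgType σ) ≤ Fintype.card (OneType σ) ^ 4 :=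
  calc Fintype.card (MsgType σ) ≤ Fintype.card (TwoType σ) := Fintype.card_subtype_le _
    _ ≤ Fintype.card (OneType σ × OneType σ × OneType σ × OneType σ) :=
      -- a 2-type is determined by its two 1-types and its `rxy` and `ryx` parts
      Fintype.card_le_of_injective
        (fun τ => (⟨τ.ux, τ.dx⟩, ⟨τ.uy, τ.dy⟩, ⟨τ.ux, τ.rxy⟩, ⟨τ.ux, τ.ryx⟩))
        (by rintro ⟨⟩ ⟨⟩ h; simp_all)
    _ = _ := by simp only [Fintype.card_prod]; ring

theorem add_pow_le_two_pow {L M N Y Z n : ℕ} (hM : M ≤ L ^ 4)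
    (hn : L + N + Nat.log 2 Y + Nat.log 2 Z ≤ n) :
    (Z + 2 + M * Y) + ((N + 1) ^ 2 * (Y + 1) * (Z + 2 + M * Y)) ^ (N + 2) ≤
      2 ^ (9 * (n + 2) ^ 2) := by
  set V := 2 ^ (n + 2)
  have hV : ∀ e ≤ n + 2, 2 ^ e ≤ V := fun e he => Nat.pow_le_pow_right (by norm_num) he
  have hV4 : 4 ≤ V := hV 2 (by omega)
  have hN : N + 1 ≤ V := Nat.lt_two_pow_self.trans_le (hV N (by omega))
  have hY : Y + 1 ≤ V := (Nat.lt_pow_succ_log_self (by norm_num) Y).trans_le (hV _ (by omega))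
  have hZ : Z + 2 ≤ V := by
    have h₁ := Nat.lt_pow_succ_log_self (b := 2) (by norm_num) Z
    have h₂ := hV (Nat.log 2 Z + 2) (by omega)
    rw [pow_succ] at h₂
    omega
  have hM' : M ≤ V ^ 4 :=
    hM.trans (Nat.pow_le_pow_left (Nat.lt_two_pow_self.le.trans (hV L (by omega))) 4)
  set Λ := Z + 2 + M * Y
  have hΛ : Λ ≤ 2 * V ^ 5 := by
    have : M * Y ≤ V ^ 5 := (Nat.mul_le_mul hM' (by omega : Y ≤ V)).trans_eq (pow_succ V 4).symm
    have : V ≤ V ^ 5 := Nat.le_self_pow (by norm_num) V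
    omega
  set Q := (N + 1) ^ 2 * (Y + 1) * Λ
  have hQ : 2 * Q ≤ V ^ 9 :=
    calc 2 * Q ≤ 2 * (V ^ 2 * V * (2 * V ^ 5)) := by simp only [Q]; gcongr
      _ = 4 * V ^ 8 := by ring
      _ ≤ V * V ^ 8 := Nat.mul_le_mul_right _ hV4
      _ = V ^ 9 := by ring
  have hΛQ : Λ ≤ Q ^ (N + 2) :=
    (Nat.le_mul_of_pos_left Λ (by positivity)).trans (Nat.le_self_pow (by omega) Q)
  calc Λ + Q ^ (N + 2) ≤ 2 ^ (N + 2) * Q ^ (N + 2) := by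
        have : 2 ≤ 2 ^ (N + 2) := Nat.le_self_pow (by omega) 2
        nlinarith
    _ = (2 * Q) ^ (N + 2) := (mul_pow _ _ _).symm
    _ ≤ (V ^ 9) ^ (N + 2) := Nat.pow_le_pow_left hQ _
    _ = 2 ^ ((n + 2) * (9 * (N + 2))) := by rw [← pow_mul, ← pow_mul]
    _ ≤ 2 ^ (9 * (n + 2) ^ 2) := Nat.pow_le_pow_right (by norm_num) (by nlinarith)

/-- Lemma 19 (small solutions): there is a fixed singly exponential function
E(n) = 2^{p(n)} such that a Y-bounded N-dimensional frame has a Z-solution iff it has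
one with all components at most E(L + M* + N + log Y + log Z). -/
theorem small_zsolution : ∃ p : Polynomial ℕ,
    ∀ (σ : CSig) (F : Frame σ) (Y N Z : ℕ),
      F.Bounded Y → F.stars.card = N →
      ((∃ w : StarType σ → ℕ, IsZSolution F Z w) ↔
        ∃ w : StarType σ → ℕ, IsZSolution F Z w ∧
          ∀ s ∈ F.stars,
            w s ≤ 2 ^ (p.eval (Fintype.card (OneType σ) + MstarCard σ + N +
              Nat.log 2 Y + Nat.log 2 Z))) := by
  refine ⟨Polynomial.C 9 * (Polynomial.X + Polynomial.C 2) ^ 2, fun σ F Y N Z hY hN =>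
    ⟨fun ⟨w, hw⟩ => ?_, fun ⟨w, hw, _⟩ => ⟨w, hw⟩⟩⟩
  obtain ⟨w', hw', hbound⟩ := hw.exists_bounded hY
  refine ⟨w', hw', fun s hs => (hbound s hs).trans ?_⟩
  subst hN
  simpa using add_pow_le_two_pow (card_msgType_le σ) (by omega)
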